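/- arXiv:1307.2124 — 5 statements merged into one kernel-verified Lean document; each statement's English description precedes it below -/
import Mathlib

section
/- Let G be a closed convex subset of ℝ^m with nonempty interior, let a be an interior point of G, let y ∈ ∂G, and let n be an inward normal unit vector at y. Then ⟨y - a, n⟩ ≤ - dist(a, ∂G). -/
open scoped RealInnerProductSpace

theorem stmt1 {m : ℕ} (G : Set (EuclideanSpace ℝ (Fin m)))
    (hGc : IsClosed G) (hGconv : Convex ℝ G)
    (a : EuclideanSpace ℝ (Fin m)) (ha : a ∈ interior G)
    (y : EuclideanSpace ℝ (Fin m)) (hy : y ∈ frontier G)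
    (n : EuclideanSpace ℝ (Fin m)) (hn : ‖n‖ = 1)
    (hnormal : ∀ x ∈ G, ⟪y - x, n⟫ ≤ 0) :
    ⟪y - a, n⟫ ≤ -Metric.infDist a (frontier G) := by
  set r := Metric.infDist a (frontier G) with hr_def
  -- Key claim: any point outside G is at distance > r from a
  have key : ∀ z, z ∉ G → r < dist a z := by
    intro z hz
    -- the segment from a to z meets the frontier of G
    have hseg : ∃ w ∈ segment ℝ a z, w ∈ frontier G := by
      by_contra h
      push_neg at h
      have hsub : segment ℝ a z ⊆ interior G ∪ Gᶜ := by
        intro x hx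
        by_cases hxG : x ∈ G
        · left
          by_contra hxi
          exact h x hx (by rw [hGc.frontier_eq]; exact ⟨hxG, hxi⟩)
        · right; exact hxG
      have hdisj : Disjoint (interior G) Gᶜ :=
        Set.disjoint_compl_right_iff_subset.mpr interior_subset
      rcases (convex_segment a z).isPreconnected.subset_or_subset
          isOpen_interior hGc.isOpen_compl hdisj hsub with hL | hR
      · exact hz (interior_subset (hL (right_mem_segment ℝ a z)))
      · exact hR (left_mem_segment ℝ a z) (interior_subset ha)
    obtain ⟨w, hwseg, hwf⟩ := hseg
    have h1 : r ≤ dist a w := Metric.infDist_le_dist_of_mem hwf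
    have h2 : dist a w + dist w z = dist a z := dist_add_dist_of_mem_segment hwseg
    have hwz : w ≠ z := by
      intro h; rw [h] at hwf
      exact hz (hGc.frontier_subset hwf)
    have : 0 < dist w z := dist_pos.mpr hwz
    linarith
  -- the point a - r • n lies in G
  have hx : a - r • n ∈ G := by
    by_contra hzx
    have := key _ hzx
    rw [dist_eq_norm, sub_sub_cancel, norm_smul, hn, mul_one,
      Real.norm_eq_abs] at this
    have hr0 : 0 ≤ r := Metric.infDist_nonneg
    rw [abs_of_nonneg hr0] at this
    exact lt_irrefl r this
  have := hnormal _ hx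
  have hexp : ⟪y - (a - r • n), n⟫ = ⟪y - a, n⟫ + r * ⟪n, n⟫ := by
    rw [sub_sub_eq_add_sub, ← sub_add_eq_add_sub, inner_add_left,
      real_inner_smul_left]
  have hnn : ⟪n, n⟫ = (1 : ℝ) := by
    rw [real_inner_self_eq_norm_sq, hn]; norm_num
  rw [hexp, hnn, mul_one] at this
  linarith
end

section
/- Let G be a closed convex subset of ℝ^m with nonempty interior, let a ∈ int G, and let x ∈ ℝ^m with dist(x, G) > 0. If y = Π_G(x) is the metric projection of x onto G, then ⟨x - a, y - x⟩ ≤ - dist(a, ∂G) · |y - x|. -/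
open scoped RealInnerProductSpace

/-- A preconnected set meeting both `G` and its complement meets the frontier of `G`. -/
lemma seg_frontier_aux {X : Type*} [TopologicalSpace X] {s G : Set X}
    (hs : IsPreconnected s) {a z : X} (ha : a ∈ s) (haG : a ∈ G)
    (hz : z ∈ s) (hzG : z ∉ G) : (s ∩ frontier G).Nonempty := by
  by_contra h
  rw [Set.not_nonempty_iff_eq_empty] at h
  have hdisj : ∀ p ∈ s, p ∉ frontier G := by
    intro p hp hpf
    exact absurd (Set.mem_inter hp hpf) (h ▸ Set.notMem_empty p)
  have hsub : s ⊆ interior G ∪ (closure G)ᶜ := by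
    intro p hp
    by_cases hpc : p ∈ closure G
    · left
      by_contra hpi
      exact hdisj p hp ⟨hpc, hpi⟩
    · right; exact hpc
  have hne : (s ∩ (interior G ∩ (closure G)ᶜ)).Nonempty := by
    refine hs (interior G) (closure G)ᶜ isOpen_interior isClosed_closure.isOpen_compl hsub
      ⟨a, ha, ?_⟩ ⟨z, hz, ?_⟩
    · by_contra hai
      exact hdisj a ha ⟨subset_closure haG, hai⟩
    · intro hzc
      by_cases hzi : z ∈ interior G
      · exact hzG (interior_subset hzi)
      · exact hdisj z hz ⟨hzc, hzi⟩
  obtain ⟨p, _, hpi, hpc⟩ := hne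
  exact hpc (subset_closure (interior_subset hpi))

theorem stmt3 {m : ℕ} (G : Set (EuclideanSpace ℝ (Fin m)))
    (hGc : IsClosed G) (hGconv : Convex ℝ G)
    (a : EuclideanSpace ℝ (Fin m)) (ha : a ∈ interior G)
    (x y : EuclideanSpace ℝ (Fin m)) (hx : 0 < Metric.infDist x G)
    (hyG : y ∈ G) (hproj : dist x y = Metric.infDist x G) :
    ⟪x - a, y - x⟫ ≤ -Metric.infDist a (frontier G) * ‖y - x‖ := by
  set r := Metric.infDist a (frontier G) with hr
  have haG : a ∈ G := interior_subset ha
  have hrnn : 0 ≤ r := Metric.infDist_nonneg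
  -- the open ball of radius `r` around `a` is in `G`
  have hball : Metric.ball a r ⊆ G := by
    intro z hz
    by_contra hzG
    obtain ⟨w, hwseg, hwfr⟩ := seg_frontier_aux (convex_segment a z).isPreconnected
      (left_mem_segment ℝ a z) haG (right_mem_segment ℝ a z) hzG
    have h1 : r ≤ dist a w := Metric.infDist_le_dist_of_mem hwfr
    have h2 : dist a w ≤ dist a z := by
      have := dist_add_dist_of_mem_segment hwseg
      have := dist_nonneg (x := w) (y := z)
      linarith
    rw [Metric.mem_ball'] at hz
    linarith
  have hcball : Metric.closedBall a r ⊆ G := by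
    rcases eq_or_lt_of_le hrnn with h0 | h0
    · rw [← h0]
      simpa using haG
    · rw [← closure_ball a h0.ne']
      exact hGc.closure_subset_iff.2 hball
  -- projection variational inequality
  have hiInf : ‖x - y‖ = ⨅ w : G, ‖x - w‖ := by
    rw [← dist_eq_norm, hproj, Metric.infDist_eq_iInf]
    simp only [dist_eq_norm]
  have hvar : ∀ w ∈ G, ⟪x - y, w - y⟫ ≤ 0 :=
    (norm_eq_iInf_iff_real_inner_le_zero hGconv hyG).1 hiInf
  set n := ‖x - y‖ with hn
  have hnpos : 0 < n := by
    rw [hn, ← dist_eq_norm, hproj]; exact hx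
  -- the point `a + (r/n) • (x - y)` is in `G`
  have hz0 : a + (r / n) • (x - y) ∈ G := by
    apply hcball
    rw [Metric.mem_closedBall, dist_eq_norm]
    have : a + (r / n) • (x - y) - a = (r / n) • (x - y) := by abel
    rw [this, norm_smul, ← hn, Real.norm_eq_abs, abs_of_nonneg (by positivity)]
    rw [div_mul_cancel₀ r hnpos.ne']
  have hkey := hvar _ hz0
  have hexp : a + (r / n) • (x - y) - y = (a - y) + (r / n) • (x - y) := by abel
  rw [hexp, inner_add_right, real_inner_smul_right, real_inner_self_eq_norm_sq, ← hn] at hkey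
  -- so ⟪x - y, a - y⟫ ≤ - r * n
  have hc : ⟪x - y, a - y⟫ ≤ -(r * n) := by
    have : r / n * n ^ 2 = r * n := by field_simp
    linarith [hkey, this.symm ▸ hkey]
  -- expand the goal
  have hgoal : ⟪x - a, y - x⟫ = -(n ^ 2) + ⟪x - y, a - y⟫ := by
    have h1 : x - a = (x - y) - (a - y) := by abel
    have h2 : y - x = -(x - y) := by abel
    rw [h1, h2, inner_neg_right, inner_sub_left, real_inner_self_eq_norm_sq, ← hn,
      real_inner_comm]
    ring
  rw [hgoal]
  have hnorm : ‖y - x‖ = n := by rw [hn, norm_sub_rev]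
  rw [hnorm]
  nlinarith [sq_nonneg n]
end

section
/- Let {G_t ; t ∈ [0,T]} be a family of nonempty bounded closed subsets of ℝ^m such that the map t ↦ G_t is right-continuous with left limits (càdlàg) with respect to the Hausdorff metric ρ, and G_T = G_{T-}. For j ∈ ℕ define the discretization {G^j_t} by G^j_t = G_{t^j_{i-1}} for t ∈ [t^j_{i-1}, t^j_i), where t^j_0 = 0 and t^j_i = (t^j_{i-1} + 1/j) ∧ inf{ t > t^j_{i-1} : ρ(G_{t-}, G_t) > 1/j } ∧ T, and G^j_T = G^j_{T-}. Then sup_{t ≤ T} ρ(G_t, G^j_t) → 0 as j → ∞. -/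
open Filter Metric Set TopologicalSpace

-- find the cell containing a point (no monotonicity needed)
lemma exists_between_aux (r : ℕ → ℝ) (a : ℝ) :
    ∀ n : ℕ, r 0 ≤ a → a < r n → ∃ k < n, r k ≤ a ∧ a < r (k+1) := by
  intro n
  induction n with
  | zero => intro h1 h2; exact absurd (lt_of_le_of_lt h1 h2) (lt_irrefl _)
  | succ n ih =>
    intro h1 h2
    by_cases h : r n ≤ a
    · exact ⟨n, Nat.lt_succ_self n, h, h2⟩
    · obtain ⟨k, hk, hk1, hk2⟩ := ih h1 (not_le.mp h)
      exact ⟨k, hk.trans (Nat.lt_succ_self n), hk1, hk2⟩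

lemma chain_lt (r : ℕ → ℝ) (n : ℕ) (h : ∀ i < n, r i < r (i+1)) :
    ∀ i k, i < k → k ≤ n → r i < r k := by
  intro i k
  induction k with
  | zero => omega
  | succ k ih =>
    intro hik hkn
    rcases Nat.lt_or_ge i k with h'|h'
    · exact (ih h' (by omega)).trans (h k (by omega))
    · have : i = k := by omega
      subst this; exact h i (by omega)

lemma dist_leftlim_le {X : Type*} [MetricSpace X] {f : ℝ → X} {x : X} {a c M : ℝ}
    (hac : a < c) (hl : Tendsto f (nhdsWithin c (Iio c)) (nhds x))
    (h : ∀ s, a ≤ s → s < c → dist (f a) (f s) ≤ M) : dist (f a) x ≤ M := by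
  have h1 : Tendsto (fun s => dist (f a) (f s)) (nhdsWithin c (Iio c)) (nhds (dist (f a) x)) :=
    tendsto_const_nhds.dist hl
  refine le_of_tendsto h1 ?_
  filter_upwards [mem_nhdsWithin_of_mem_nhds (Ioi_mem_nhds hac), self_mem_nhdsWithin] with s hs1 hs2
  exact h s (le_of_lt hs1) hs2

lemma extend_partition {X : Type*} [MetricSpace X] (f : ℝ → X) (ε v w : ℝ) (hvw : v < w)
    (n : ℕ) (r : ℕ → ℝ) (hr0 : r 0 = 0) (hrn : r n = v)
    (hmono : ∀ i < n, r i < r (i+1))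
    (hosc : ∀ i < n, ∀ s, r i ≤ s → s < r (i+1) → dist (f (r i)) (f s) ≤ ε)
    (hnew : ∀ s, v ≤ s → s < w → dist (f v) (f s) ≤ ε) :
    ∃ (n' : ℕ) (r' : ℕ → ℝ), r' 0 = 0 ∧ r' n' = w ∧ (∀ i < n', r' i < r' (i+1)) ∧
      (∀ i < n', ∀ s, r' i ≤ s → s < r' (i+1) → dist (f (r' i)) (f s) ≤ ε) := by
  refine ⟨n+1, fun i => if i ≤ n then r i else w, ?_, ?_, ?_, ?_⟩
  · simp [hr0]
  · simp
  · intro i hi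
    rcases Nat.lt_or_ge i n with h'|h'
    · simpa [Nat.le_of_lt h', Nat.succ_le_of_lt h'] using hmono i h'
    · have hin : i = n := by omega
      subst hin
      simpa [hrn] using hvw
  · intro i hi s
    rcases Nat.lt_or_ge i n with h'|h'
    · simpa [Nat.le_of_lt h', Nat.succ_le_of_lt h'] using hosc i h' s
    · have hin : i = n := by omega
      subst hin
      simpa [hrn] using hnew s

lemma exists_partition {X : Type*} [MetricSpace X] (f fl : ℝ → X) (T : ℝ) (hT : 0 < T)
    (hright : ∀ t ∈ Icc (0:ℝ) T, ContinuousWithinAt f (Ici t) t)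
    (hleft : ∀ t ∈ Ioc (0:ℝ) T, Tendsto f (nhdsWithin t (Iio t)) (nhds (fl t)))
    (ε : ℝ) (hε : 0 < ε) :
    ∃ (n : ℕ) (r : ℕ → ℝ), r 0 = 0 ∧ r n = T ∧ (∀ i < n, r i < r (i+1)) ∧
      (∀ i < n, ∀ s, r i ≤ s → s < r (i+1) → dist (f (r i)) (f s) ≤ ε) := by
  set A : Set ℝ := {u | 0 ≤ u ∧ u ≤ T ∧ ∃ (n : ℕ) (r : ℕ → ℝ), r 0 = 0 ∧ r n = u ∧
    (∀ i < n, r i < r (i+1)) ∧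
    (∀ i < n, ∀ s, r i ≤ s → s < r (i+1) → dist (f (r i)) (f s) ≤ ε)} with hA
  have h0 : (0:ℝ) ∈ A := ⟨le_refl 0, hT.le, 0, fun _ => 0, rfl, rfl, by omega, by omega⟩
  have hbdd : BddAbove A := ⟨T, fun x hx => hx.2.1⟩
  have hAne : A.Nonempty := ⟨0, h0⟩
  have hu0 : 0 ≤ sSup A := le_csSup hbdd h0
  have huT : sSup A ≤ T := csSup_le hAne (fun x hx => hx.2.1)
  -- step 1 : sSup A ∈ A
  have step1 : sSup A ∈ A := by
    rcases eq_or_lt_of_le hu0 with h|h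
    · rw [← h]; exact h0
    · have hl := hleft (sSup A) ⟨h, huT⟩
      rw [Metric.tendsto_nhdsWithin_nhds] at hl
      obtain ⟨η, hη, hball⟩ := hl (ε/2) (by positivity)
      have hlt : sSup A - min η (sSup A) / 2 < sSup A := by
        have : 0 < min η (sSup A) := lt_min hη h
        linarith
      obtain ⟨v, hvA, hv⟩ := exists_lt_of_lt_csSup hAne hlt
      rcases eq_or_lt_of_le (le_csSup hbdd hvA) with hvu|hvu
      · rw [← hvu]; exact hvA
      · obtain ⟨hv0, hvT, n, r, hr0, hrn, hmono, hosc⟩ := hvA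
        have hd : ∀ s, v ≤ s → s < sSup A → dist (f s) (fl (sSup A)) < ε/2 := by
          intro s hs1 hs2
          refine hball (mem_Iio.mpr hs2) ?_
          rw [Real.dist_eq, abs_of_nonpos (by linarith)]
          have : min η (sSup A) ≤ η := min_le_left _ _
          linarith
        have hnew : ∀ s, v ≤ s → s < sSup A → dist (f v) (f s) ≤ ε := by
          intro s hs1 hs2
          have d1 := hd v (le_refl v) hvu
          have d2 := hd s hs1 hs2
          calc dist (f v) (f s) ≤ dist (f v) (fl (sSup A)) + dist (f s) (fl (sSup A)) :=
                dist_triangle_right _ _ _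
            _ ≤ ε := by linarith
        obtain ⟨n', r', h1, h2, h3, h4⟩ := extend_partition f ε v (sSup A) hvu n r hr0 hrn hmono hosc hnew
        exact ⟨hu0, huT, n', r', h1, h2, h3, h4⟩
  -- step 2 : sSup A = T
  have step2 : sSup A = T := by
    by_contra hne
    have huT' : sSup A < T := lt_of_le_of_ne huT hne
    have hr := hright (sSup A) ⟨hu0, huT⟩
    rw [Metric.continuousWithinAt_iff] at hr
    obtain ⟨η, hη, hball⟩ := hr ε hε
    have hwu : sSup A < min (sSup A + η/2) T := lt_min (by linarith) huT'
    have hwT : min (sSup A + η/2) T ≤ T := min_le_right _ _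
    obtain ⟨hu0', _, n, r, hr0, hrn, hmono, hosc⟩ := step1
    have hnew : ∀ s, sSup A ≤ s → s < min (sSup A + η/2) T → dist (f (sSup A)) (f s) ≤ ε := by
      intro s hs1 hs2
      rw [dist_comm]
      refine le_of_lt (hball (mem_Ici.mpr hs1) ?_)
      rw [Real.dist_eq, abs_of_nonneg (by linarith)]
      have : min (sSup A + η/2) T ≤ sSup A + η/2 := min_le_left _ _
      linarith
    obtain ⟨n', r', h1, h2, h3, h4⟩ := extend_partition f ε (sSup A) (min (sSup A + η/2) T)
      hwu n r hr0 hrn hmono hosc hnew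
    have hwA : min (sSup A + η/2) T ∈ A := ⟨by linarith, hwT, n', r', h1, h2, h3, h4⟩
    have := le_csSup hbdd hwA
    linarith
  obtain ⟨_, _, n, r, hr0, hrn, hmono, hosc⟩ := step1
  exact ⟨n, r, hr0, by rw [hrn, step2], hmono, hosc⟩

theorem stmt5 (m : ℕ) (T : ℝ) (hT : 0 < T)
    (G Gl : ℝ → NonemptyCompacts (EuclideanSpace ℝ (Fin m)))
    (hright : ∀ t ∈ Icc (0:ℝ) T, ContinuousWithinAt G (Ici t) t)
    (hleft : ∀ t ∈ Ioc (0:ℝ) T, Tendsto G (nhdsWithin t (Iio t)) (nhds (Gl t)))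
    (hGT : G T = Gl T)
    (tj : ℕ → ℕ → ℝ)
    (ht0 : ∀ j, tj j 0 = 0)
    (htsucc : ∀ j, 1 ≤ j → ∀ i, tj j (i + 1) =
      min (min (tj j i + 1 / (j : ℝ))
        (sInf {t : ℝ | tj j i < t ∧ 1 / (j : ℝ) < dist (Gl t) (G t)})) T)
    (Gj : ℕ → ℝ → NonemptyCompacts (EuclideanSpace ℝ (Fin m)))
    (hGj : ∀ j, 1 ≤ j → ∀ i, ∀ t ∈ Ico (tj j i) (tj j (i + 1)), Gj j t = G (tj j i))
    (hreach : ∀ j, 1 ≤ j → ∃ i, tj j i < T ∧ tj j (i + 1) = T ∧ Gj j T = G (tj j i)) :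
    Tendsto (fun j => ⨆ t : Icc (0:ℝ) T, dist (G t) (Gj j t)) atTop (nhds 0) := by
  rw [Metric.tendsto_atTop]
  intro ε hε
  obtain ⟨n, r, hr0, hrn, hrlt, hosc⟩ := exists_partition G Gl T hT hright hleft (ε/10) (by positivity)
  have hn : 0 < n := by
    rcases Nat.eq_zero_or_pos n with h|h
    · exfalso; rw [h, hr0] at hrn; linarith
    · exact h
  have hne : (Finset.range n).Nonempty := Finset.nonempty_range_iff.mpr hn.ne'
  set δ := (Finset.range n).inf' hne (fun i => r (i+1) - r i) with hδ
  have hδpos : 0 < δ := by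
    rw [hδ, Finset.lt_inf'_iff]
    exact fun i hi => sub_pos.mpr (hrlt i (Finset.mem_range.mp hi))
  have hδle : ∀ i, i < n → δ ≤ r (i+1) - r i := fun i hi => Finset.inf'_le _ (Finset.mem_range.mpr hi)
  obtain ⟨N, hN⟩ := exists_nat_gt (max (1/δ) (10/ε))
  refine ⟨max N 1, fun j hj => ?_⟩
  have hj1 : 1 ≤ j := le_trans (le_max_right N 1) hj
  have hjN : (N:ℝ) ≤ (j:ℝ) := Nat.cast_le.mpr (le_trans (le_max_left N 1) hj)
  have hjpos : 0 < (j:ℝ) := by exact_mod_cast hj1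
  have hinvpos : 0 < 1/(j:ℝ) := by positivity
  have hinvδ : 1/(j:ℝ) < δ := by
    have h1 : 1/δ < (j:ℝ) := lt_of_lt_of_le (lt_of_le_of_lt (le_max_left _ _) hN) hjN
    rw [div_lt_iff₀ hδpos] at h1
    rw [div_lt_iff₀ hjpos]
    nlinarith
  have hinvε : 1/(j:ℝ) < ε/10 := by
    have h1 : 10/ε < (j:ℝ) := lt_of_lt_of_le (lt_of_le_of_lt (le_max_right _ _) hN) hjN
    rw [div_lt_iff₀ hε] at h1
    rw [div_lt_iff₀ hjpos]
    nlinarith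
  have htnn : ∀ i, 0 ≤ tj j i := by
    intro i
    induction i with
    | zero => rw [ht0]
    | succ i ih =>
      rw [htsucc j hj1 i]
      refine le_min (le_min (by linarith) ?_) hT.le
      exact Real.sInf_nonneg (fun x hx => le_of_lt (lt_of_le_of_lt ih hx.1))
  -- key pointwise estimate
  have hstep : ∀ a t : ℝ, 0 ≤ a → a ≤ t → t ≤ T → t ≤ a + 1/(j:ℝ) →
      (∀ c, a < c → c ≤ t → c < T → dist (Gl c) (G c) ≤ 1/(j:ℝ)) →
      dist (G a) (G t) ≤ ε/2 := by
    intro a t ha0 hat htT htb hjump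
    rcases eq_or_lt_of_le (hat.trans htT) with haT|haT
    · have hta : a = t := by linarith
      rw [hta, dist_self]; linarith
    · obtain ⟨k, hk, hk1, hk2⟩ := exists_between_aux r a n (by rw [hr0]; exact ha0)
        (by rw [hrn]; exact haT)
      have hcell : ∀ s u, r k ≤ s → s < r (k+1) → r k ≤ u → u < r (k+1) →
          dist (G s) (G u) ≤ 2*(ε/10) := by
        intro s u h1 h2 h3 h4
        have d1 := hosc k hk s h1 h2
        have d2 := hosc k hk u h3 h4
        calc dist (G s) (G u) ≤ dist (G (r k)) (G s) + dist (G (r k)) (G u) :=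
              dist_triangle_left _ _ _
          _ ≤ 2*(ε/10) := by linarith
      rcases lt_or_ge t (r (k+1)) with hcase|hcase
      · have := hcell a t hk1 hk2 (hk1.trans hat) hcase
        linarith
      · have hac : a < r (k+1) := hk2
        have hcT : r (k+1) ≤ T := by
          rcases Nat.lt_or_ge (k+1) n with h|h
          · rw [← hrn]; exact le_of_lt (chain_lt r n hrlt (k+1) n h (le_refl n))
          · have h' : k + 1 = n := by omega
            rw [← hrn, h']
        have h1 : dist (G a) (Gl (r (k+1))) ≤ 2*(ε/10) := by
          refine dist_leftlim_le hac (hleft (r (k+1)) ⟨lt_of_le_of_lt ha0 hac, hcT⟩) ?_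
          intro s hs1 hs2
          exact hcell a s hk1 hk2 (hk1.trans hs1) hs2
        have h2 : dist (Gl (r (k+1))) (G (r (k+1))) ≤ 1/(j:ℝ) := by
          rcases lt_or_ge (r (k+1)) T with h|h
          · exact hjump (r (k+1)) hac hcase h
          · have hceq : r (k+1) = T := le_antisymm hcT h
            rw [hceq, hGT, dist_self]; linarith
        have h3 : dist (G (r (k+1))) (G t) ≤ ε/10 := by
          rcases eq_or_lt_of_le hcase with heq|hlt'
          · rw [heq, dist_self]; linarith
          · have hk1n : k + 1 < n := by
              by_contra hcon
              have hkn : k + 1 = n := by omega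
              have : r (k+1) = T := by rw [hkn, hrn]
              linarith
            have htlt : t < r (k+1+1) := by
              have := hδle (k+1) hk1n
              linarith
            exact hosc (k+1) hk1n t hcase htlt
        calc dist (G a) (G t)
            ≤ dist (G a) (Gl (r (k+1))) + dist (Gl (r (k+1))) (G (r (k+1)))
              + dist (G (r (k+1))) (G t) := dist_triangle4 _ _ _ _
          _ ≤ ε/2 := by linarith
  -- pointwise bound for all t
  have hpt : ∀ t : ℝ, 0 ≤ t → t ≤ T → dist (G t) (Gj j t) ≤ ε/2 := by
    intro t ht0' htT'
    obtain ⟨i0, hi0, hi0T, hGjT⟩ := hreach j hj1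
    rcases eq_or_lt_of_le htT' with hteq|htlt
    · rw [hteq, hGjT, dist_comm]
      have hb := htsucc j hj1 i0
      rw [hi0T] at hb
      have hTle : T ≤ min (tj j i0 + 1/(j:ℝ))
          (sInf {t : ℝ | tj j i0 < t ∧ 1/(j:ℝ) < dist (Gl t) (G t)}) :=
        min_eq_right_iff.mp hb.symm
      have hT1 : T ≤ tj j i0 + 1/(j:ℝ) := hTle.trans (min_le_left _ _)
      have hT2 : T ≤ sInf {t : ℝ | tj j i0 < t ∧ 1/(j:ℝ) < dist (Gl t) (G t)} :=
        hTle.trans (min_le_right _ _)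
      refine hstep (tj j i0) T (htnn i0) hi0.le (le_refl T) hT1 ?_
      intro c hac hct hcT
      by_contra hbig
      push_neg at hbig
      have hmem : c ∈ {t : ℝ | tj j i0 < t ∧ 1/(j:ℝ) < dist (Gl t) (G t)} := ⟨hac, hbig⟩
      have := csInf_le ⟨tj j i0, fun x hx => hx.1.le⟩ hmem
      linarith
    · obtain ⟨i, hiI, hile, hilt⟩ := exists_between_aux (tj j) t (i0+1)
        (by rw [ht0]; exact ht0') (by rw [hi0T]; exact htlt)
      rw [hGj j hj1 i t ⟨hile, hilt⟩, dist_comm]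
      have hb := htsucc j hj1 i
      have hb1 : tj j (i+1) ≤ tj j i + 1/(j:ℝ) := by
        rw [hb]; exact (min_le_left _ _).trans (min_le_left _ _)
      have hb2 : tj j (i+1) ≤ sInf {t : ℝ | tj j i < t ∧ 1/(j:ℝ) < dist (Gl t) (G t)} := by
        rw [hb]; exact (min_le_left _ _).trans (min_le_right _ _)
      refine hstep (tj j i) t (htnn i) hile htT' (by linarith) ?_
      intro c hac hct hcT
      by_contra hbig
      push_neg at hbig
      have hmem : c ∈ {t : ℝ | tj j i < t ∧ 1/(j:ℝ) < dist (Gl t) (G t)} := ⟨hac, hbig⟩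
      have := csInf_le ⟨tj j i, fun x hx => hx.1.le⟩ hmem
      linarith
  have hsup_le : (⨆ t : Icc (0:ℝ) T, dist (G t) (Gj j t)) ≤ ε/2 := by
    refine Real.iSup_le ?_ (by linarith)
    intro t
    exact hpt t t.2.1 t.2.2
  have hsup_nonneg : 0 ≤ ⨆ t : Icc (0:ℝ) T, dist (G t) (Gj j t) :=
    Real.iSup_nonneg (fun t => dist_nonneg)
  rw [Real.dist_eq, sub_zero, abs_of_nonneg hsup_nonneg]
  linarith
end

section
/- Let G_t, t ∈ [0,T], be a càdlàg (in the Hausdorff metric) family of nonempty bounded closed subsets of ℝ^m with G_T = G_{T-}, and for each j define stopping thresholds t^j_0 = 0, t^j_i = (t^j_{i-1} + a^j_i) ∧ inf{ t > t^j_{i-1} : ρ(G_{t-}, G_t) > 1/j } ∧ T where a^j_i are arbitrary constants with 1/j ≤ a^j_i ≤ 2/j, and set G^j_t = G_{t^j_{i-1}} for t ∈ [t^j_{i-1}, t^j_i), G^j_T = G^j_{T-}. Then sup_{t ≤ T} ρ(G_t, G^j_t) → 0 as j → ∞. -/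
open Filter Metric Set TopologicalSpace

theorem stmt6 (m : ℕ) (T : ℝ) (hT : 0 < T)
    (G Gl : ℝ → NonemptyCompacts (EuclideanSpace ℝ (Fin m)))
    (hright : ∀ t ∈ Icc (0:ℝ) T, ContinuousWithinAt G (Ici t) t)
    (hleft : ∀ t ∈ Ioc (0:ℝ) T, Tendsto G (nhdsWithin t (Iio t)) (nhds (Gl t)))
    (hGT : G T = Gl T)
    (a : ℕ → ℕ → ℝ)
    (ha : ∀ j : ℕ, 1 ≤ j → ∀ i, 1 / (j : ℝ) ≤ a j i ∧ a j i ≤ 2 / (j : ℝ))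
    (tj : ℕ → ℕ → ℝ)
    (ht0 : ∀ j, tj j 0 = 0)
    (htsucc : ∀ j, 1 ≤ j → ∀ i, tj j (i + 1) =
      min (min (tj j i + a j (i + 1))
        (sInf {t : ℝ | tj j i < t ∧ 1 / (j : ℝ) < dist (Gl t) (G t)})) T)
    (Gj : ℕ → ℝ → NonemptyCompacts (EuclideanSpace ℝ (Fin m)))
    (hGj : ∀ j, 1 ≤ j → ∀ i, ∀ t ∈ Ico (tj j i) (tj j (i + 1)), Gj j t = G (tj j i))
    (hreach : ∀ j, 1 ≤ j → ∃ i, tj j i < T ∧ tj j (i + 1) = T ∧ Gj j T = G (tj j i)) :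
    Tendsto (fun j => ⨆ t : Icc (0:ℝ) T, dist (G t) (Gj j t)) atTop (nhds 0) := by
  classical
  by_contra hcon
  haveI : Nonempty (Icc (0:ℝ) T) := ⟨⟨0, le_refl 0, hT.le⟩⟩
  set F : ℕ → ℝ := fun j => ⨆ t : Icc (0:ℝ) T, dist (G t) (Gj j t) with hF
  have hFnn : ∀ j, 0 ≤ F j := fun j => Real.iSup_nonneg fun _ => dist_nonneg
  -- basic bounds on tj
  have hjpos : ∀ j : ℕ, 1 ≤ j → (0:ℝ) < j := fun j hj => by exact_mod_cast hj
  have htj_bounds : ∀ j, 1 ≤ j → ∀ i, 0 ≤ tj j i ∧ tj j i ≤ T := by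
    intro j hj i
    induction i with
    | zero => rw [ht0]; exact ⟨le_refl 0, hT.le⟩
    | succ i ih =>
      rw [htsucc j hj i]
      refine ⟨le_min (le_min ?_ ?_) hT.le, min_le_right _ _⟩
      · have h1 := (ha j hj (i+1)).1
        have h2 : (0:ℝ) < 1 / j := by positivity
        linarith [ih.1]
      · exact Real.sInf_nonneg fun x hx => le_of_lt (lt_of_le_of_lt ih.1 hx.1)
  have htj_step : ∀ j, 1 ≤ j → ∀ i, tj j (i + 1) ≤ tj j i + 2 / j := by
    intro j hj i
    rw [htsucc j hj i]
    have := (ha j hj (i+1)).2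
    calc min (min (tj j i + a j (i + 1)) _) T ≤ tj j i + a j (i + 1) :=
          le_trans (min_le_left _ _) (min_le_left _ _)
      _ ≤ tj j i + 2 / j := by linarith
  -- no big jumps strictly inside an interval
  have hjump : ∀ j, 1 ≤ j → ∀ i s, tj j i < s → s < tj j (i + 1) →
      dist (Gl s) (G s) ≤ 1 / j := by
    intro j hj i s hs1 hs2
    by_contra hc
    push_neg at hc
    have hmem : s ∈ {t : ℝ | tj j i < t ∧ 1 / (j : ℝ) < dist (Gl t) (G t)} := ⟨hs1, hc⟩
    have hbdd : BddBelow {t : ℝ | tj j i < t ∧ 1 / (j : ℝ) < dist (Gl t) (G t)} :=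
      ⟨tj j i, fun x hx => le_of_lt hx.1⟩
    have h1 : tj j (i + 1) ≤ s := by
      rw [htsucc j hj i]
      exact le_trans (le_trans (min_le_left _ _) (min_le_right _ _)) (csInf_le hbdd hmem)
    linarith
  -- covering: every t ∈ [0,T) lies in some [tj i, tj (i+1))
  have hcover : ∀ j, 1 ≤ j → ∀ t, 0 ≤ t → t < T → ∃ i, tj j i ≤ t ∧ t < tj j (i + 1) := by
    intro j hj t ht0' htT
    obtain ⟨N, hN1, hN2, -⟩ := hreach j hj
    set P : ℕ → Prop := fun i => tj j i ≤ t with hP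
    have hP0 : P 0 := by simpa [hP, ht0] using ht0'
    set i := Nat.findGreatest P N with hi
    have hPi : P i := Nat.findGreatest_spec (Nat.zero_le _) hP0
    have hiN : i ≤ N := Nat.findGreatest_le N
    rcases eq_or_lt_of_le hiN with heq | hlt
    · exact ⟨i, hPi, by rw [heq, hN2]; exact htT⟩
    · refine ⟨i, hPi, ?_⟩
      have := Nat.findGreatest_is_greatest (by omega : Nat.findGreatest P N < i + 1)
        (by omega : i + 1 ≤ N)
      exact lt_of_not_ge this
  -- pointwise structure
  have hpoint : ∀ j : ℕ, 1 ≤ j → ∀ t, 0 ≤ t → t ≤ T → ∃ r, 0 ≤ r ∧ r ≤ t ∧ t ≤ r + 2 / (j:ℝ) ∧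
      Gj j t = G r ∧ ∀ s, r < s → s ≤ t → s < T → dist (Gl s) (G s) ≤ 1 / (j:ℝ) := by
    intro j hj t ht0' htT
    rcases eq_or_lt_of_le htT with rfl | htT'
    · obtain ⟨i, hi1, hi2, hi3⟩ := hreach j hj
      refine ⟨tj j i, (htj_bounds j hj i).1, hi1.le, ?_, hi3, ?_⟩
      · have := htj_step j hj i; rw [hi2] at this; exact this
      · intro s hs1 hs2 hs3
        exact hjump j hj i s hs1 (by rw [hi2]; exact hs3)
    · obtain ⟨i, hi1, hi2⟩ := hcover j hj t ht0' htT'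
      refine ⟨tj j i, (htj_bounds j hj i).1, hi1, ?_, hGj j hj i t ⟨hi1, hi2⟩, ?_⟩
      · exact le_trans hi2.le (htj_step j hj i)
      · intro s hs1 hs2 _
        exact hjump j hj i s hs1 (lt_of_le_of_lt hs2 hi2)
  -- extract bad subsequence
  rw [Metric.tendsto_atTop] at hcon
  push_neg at hcon
  obtain ⟨ε, hε, hcon⟩ := hcon
  have hfreq : ∃ᶠ j in atTop, ε ≤ F j ∧ 1 ≤ j := by
    rw [frequently_atTop]
    intro N
    obtain ⟨n, hn, hd⟩ := hcon (max N 1)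
    refine ⟨n, le_trans (le_max_left _ _) hn, ?_, le_trans (le_max_right _ _) hn⟩
    rwa [Real.dist_eq, sub_zero, abs_of_nonneg (hFnn n)] at hd
  obtain ⟨φ, hφmono, hφ⟩ := extraction_of_frequently_atTop hfreq
  have hpt : ∀ n, ∃ t, (0 ≤ t ∧ t ≤ T) ∧ ε / 2 < dist (G t) (Gj (φ n) t) := by
    intro n
    by_contra hc
    push_neg at hc
    have : F (φ n) ≤ ε / 2 := by
      refine ciSup_le fun x => hc x ⟨x.2.1, x.2.2⟩
    linarith [(hφ n).1]
  choose t ht using hpt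
  choose r hr0 hr1 hr2 hr3 hr4 using fun n =>
    hpoint (φ n) (hφ n).2 (t n) (ht n).1.1 (ht n).1.2
  have hd : ∀ n, ε / 2 < dist (G (t n)) (G (r n)) := fun n => by
    have := (ht n).2; rwa [hr3 n] at this
  -- Bolzano-Weierstrass
  obtain ⟨c, hc, ψ, hψmono, hψconv⟩ := isCompact_Icc.tendsto_subseq
    (fun n => (⟨(ht n).1.1, (ht n).1.2⟩ : t n ∈ Icc (0:ℝ) T))
  have hJ : ∀ n : ℕ, (n : ℝ) ≤ (φ (ψ n) : ℝ) := by
    intro n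
    exact_mod_cast le_trans hψmono.le_apply hφmono.le_apply
  have h2j : Tendsto (fun n => 2 / ((φ (ψ n) : ℕ) : ℝ)) atTop (nhds 0) :=
    (tendsto_const_div_atTop_nhds_zero_nat 2).comp ((hφmono.comp hψmono).tendsto_atTop)
  have h1j : Tendsto (fun n => 1 / ((φ (ψ n) : ℕ) : ℝ)) atTop (nhds 0) :=
    (tendsto_const_div_atTop_nhds_zero_nat 1).comp ((hφmono.comp hψmono).tendsto_atTop)
  have hrconv : Tendsto (fun n => r (ψ n)) atTop (nhds c) := by
    have hlow : Tendsto (fun n => t (ψ n) - 2 / ((φ (ψ n) : ℕ) : ℝ)) atTop (nhds (c - 0)) :=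
      hψconv.sub h2j
    rw [sub_zero] at hlow
    refine tendsto_of_tendsto_of_tendsto_of_le_of_le hlow hψconv ?_ ?_
    · intro n; have := hr2 (ψ n); simp only; linarith
    · intro n; exact hr1 (ψ n)
  -- case analysis
  by_cases hcase1 : ∃ᶠ n in atTop, c ≤ r (ψ n)
  · obtain ⟨χ, hχmono, hχ⟩ := extraction_of_frequently_atTop hcase1
    have hrc : Tendsto (fun n => r (ψ (χ n))) atTop (nhds c) :=
      hrconv.comp hχmono.tendsto_atTop
    have htc : Tendsto (fun n => t (ψ (χ n))) atTop (nhds c) :=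
      hψconv.comp hχmono.tendsto_atTop
    have hGr : Tendsto (fun n => G (r (ψ (χ n)))) atTop (nhds (G c)) :=
      (hright c hc).tendsto.comp (tendsto_nhdsWithin_iff.mpr
        ⟨hrc, Eventually.of_forall fun n => hχ n⟩)
    have hGt : Tendsto (fun n => G (t (ψ (χ n)))) atTop (nhds (G c)) :=
      (hright c hc).tendsto.comp (tendsto_nhdsWithin_iff.mpr
        ⟨htc, Eventually.of_forall fun n => le_trans (hχ n) (hr1 (ψ (χ n)))⟩)
    have hdist : Tendsto (fun n => dist (G (t (ψ (χ n)))) (G (r (ψ (χ n)))))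
        atTop (nhds (dist (G c) (G c))) := hGt.dist hGr
    rw [dist_self] at hdist
    have : ε / 2 ≤ 0 := ge_of_tendsto hdist
      (Eventually.of_forall fun n => (hd (ψ (χ n))).le)
    linarith
  · have hrlt : ∀ᶠ n in atTop, r (ψ n) < c := by
      rw [not_frequently] at hcase1
      exact hcase1.mono fun n h => not_le.mp h
    have hcpos : 0 < c := by
      obtain ⟨n, hn⟩ := hrlt.exists
      exact lt_of_le_of_lt (hr0 (ψ n)) hn
    have hGrl : Tendsto (fun n => G (r (ψ n))) atTop (nhds (Gl c)) :=
      (hleft c ⟨hcpos, hc.2⟩).comp (tendsto_nhdsWithin_iff.mpr ⟨hrconv, hrlt⟩)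
    by_cases hcase2 : ∃ᶠ n in atTop, t (ψ n) < c
    · obtain ⟨χ, hχmono, hχ⟩ := extraction_of_frequently_atTop hcase2
      have htc : Tendsto (fun n => t (ψ (χ n))) atTop (nhds c) :=
        hψconv.comp hχmono.tendsto_atTop
      have hGt : Tendsto (fun n => G (t (ψ (χ n)))) atTop (nhds (Gl c)) :=
        (hleft c ⟨hcpos, hc.2⟩).comp (tendsto_nhdsWithin_iff.mpr
          ⟨htc, Eventually.of_forall fun n => hχ n⟩)
      have hGr : Tendsto (fun n => G (r (ψ (χ n)))) atTop (nhds (Gl c)) :=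
        hGrl.comp hχmono.tendsto_atTop
      have hdist : Tendsto (fun n => dist (G (t (ψ (χ n)))) (G (r (ψ (χ n)))))
          atTop (nhds (dist (Gl c) (Gl c))) := hGt.dist hGr
      rw [dist_self] at hdist
      have : ε / 2 ≤ 0 := ge_of_tendsto hdist
        (Eventually.of_forall fun n => (hd (ψ (χ n))).le)
      linarith
    · have htge : ∀ᶠ n in atTop, c ≤ t (ψ n) := by
        rw [not_frequently] at hcase2
        exact hcase2.mono fun n h => not_lt.mp h
      have hGt : Tendsto (fun n => G (t (ψ n))) atTop (nhds (G c)) :=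
        (hright c hc).tendsto.comp (tendsto_nhdsWithin_iff.mpr ⟨hψconv, htge⟩)
      have hdist : Tendsto (fun n => dist (G (t (ψ n))) (G (r (ψ n))))
          atTop (nhds (dist (G c) (Gl c))) := hGt.dist hGrl
      have hd2 : ε / 2 ≤ dist (G c) (Gl c) := ge_of_tendsto hdist
        (Eventually.of_forall fun n => (hd (ψ n)).le)
      rcases eq_or_lt_of_le hc.2 with hceq | hcT
      · rw [hceq, hGT, dist_self] at hd2; linarith
      · have hpos : 0 < dist (G c) (Gl c) := lt_of_lt_of_le (half_pos hε) hd2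
        have hev : ∀ᶠ n in atTop, 1 / ((φ (ψ n) : ℕ) : ℝ) < dist (G c) (Gl c) :=
          h1j.eventually_lt_const hpos
        obtain ⟨n, ⟨hn1, hn2⟩, hn3⟩ := ((hev.and hrlt).and htge).exists
        have := hr4 (ψ n) c hn2 hn3 hcT
        rw [dist_comm] at this
        linarith
end

section
/- Let G be a closed convex subset of ℝ^m with nonempty interior, let a ∈ int G, and let x ∉ G. Then ⟨x - a, Π_G(x) - x⟩ ≤ -dist(a,∂G)·|Π_G(x) - x| - |Π_G(x) - x|². -/
open scoped RealInnerProductSpace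

theorem stmt10 {m : ℕ} (G : Set (EuclideanSpace ℝ (Fin m)))
    (hGc : IsClosed G) (hGconv : Convex ℝ G)
    (a : EuclideanSpace ℝ (Fin m)) (ha : a ∈ interior G)
    (x y : EuclideanSpace ℝ (Fin m)) (hx : x ∉ G)
    (hyG : y ∈ G) (hproj : dist x y = Metric.infDist x G) :
    ⟪x - a, y - x⟫ ≤
      -Metric.infDist a (frontier G) * ‖y - x‖ - ‖y - x‖ ^ 2 := by
  set d := Metric.infDist a (frontier G) with hd
  have hd0 : 0 ≤ d := Metric.infDist_nonneg
  have hxy : x ≠ y := fun h => hx (h ▸ hyG)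
  have hu : (0:ℝ) < ‖x - y‖ := by
    rw [norm_pos_iff]
    intro h
    exact hxy (sub_eq_zero.mp h)
  -- d ≤ infDist a Gᶜ
  have haG : a ∈ G := interior_subset ha
  have hGne : G ≠ Set.univ := fun h => hx (h ▸ Set.mem_univ x)
  obtain ⟨y0, hy0f, hy0d⟩ := exists_mem_frontier_infDist_compl_eq_dist haG hGne
  have hdle : d ≤ Metric.infDist a Gᶜ := by
    rw [hy0d]
    exact Metric.infDist_le_dist_of_mem hy0f
  -- closedBall a d ⊆ G
  have hball : Metric.closedBall a d ⊆ G := by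
    rcases eq_or_lt_of_le hd0 with h0 | h0
    · rw [← h0, Metric.closedBall_zero]
      simpa using haG
    · have h1 : Metric.ball a d ⊆ G :=
        (Metric.ball_subset_ball hdle).trans Metric.ball_infDist_compl_subset
      rw [← closure_ball a h0.ne']
      exact hGc.closure_subset_iff.mpr h1
  -- the point z on the sphere in direction x - y
  set z := a + (d / ‖x - y‖) • (x - y) with hz
  have hzG : z ∈ G := by
    apply hball
    rw [Metric.mem_closedBall, dist_eq_norm]
    have : z - a = (d / ‖x - y‖) • (x - y) := by rw [hz]; abel
    rw [this, norm_smul, Real.norm_eq_abs, abs_of_nonneg (by positivity)]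
    rw [div_mul_cancel₀ _ hu.ne']
  -- variational inequality
  have hvar : ∀ w ∈ G, ⟪x - y, w - y⟫ ≤ 0 := by
    rw [← norm_eq_iInf_iff_real_inner_le_zero hGconv hyG]
    rw [Metric.infDist_eq_iInf] at hproj
    simp_rw [dist_eq_norm] at hproj
    exact hproj
  have hkey := hvar z hzG
  have hza : z - y = (a - y) + (d / ‖x - y‖) • (x - y) := by rw [hz]; abel
  rw [hza, inner_add_right, real_inner_smul_right, real_inner_self_eq_norm_sq] at hkey
  have h2 : ⟪x - y, a - y⟫ ≤ -(d * ‖x - y‖) := by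
    have hc : d / ‖x - y‖ * ‖x - y‖ ^ 2 = d * ‖x - y‖ := by
      field_simp
    linarith [hkey, hc.le, hc.ge]
  have hfin : ⟪x - a, y - x⟫ = ⟪x - y, a - y⟫ - ‖x - y‖ ^ 2 := by
    have e1 : x - a = (x - y) - (a - y) := by abel
    have e2 : y - x = -(x - y) := by abel
    rw [e1, e2, inner_neg_right, inner_sub_left, real_inner_self_eq_norm_sq,
      real_inner_comm (a - y) (x - y)]
    ring
  rw [hfin, norm_sub_rev y x]
  linarith [h2]
end
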